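/- arXiv:1707.05039 — 2 statements merged into one kernel-verified Lean document; each statement's English description precedes it below -/
import Mathlib

section
/- Let C be a Λ-multi-twisted code with constituents C_1,…,C_r, and for 1 ≤ w ≤ r let Θ_w be the tuple of generating idempotents of the minimal constacyclic codes ⟨(x^{m_i}−λ_i)/g_w(x)⟩ (with Θ_{w,i}=0 when g_w ∤ x^{m_i}−λ_i). Then C = ⊕_{w=1}^r ⟨Θ_w⟩ □ C_w, where ⟨Θ_w⟩ □ D denotes the concatenation {(ψ_{w,1}(δ_1),…,ψ_{w,ℓ}(δ_ℓ)) : δ ∈ D} and ψ_{w,i}(γ) = (1/m_i)(Tr_{F_w/F_q}(γ), Tr_{F_w/F_q}(γ α_w^{-1}), …, Tr_{F_w/F_q}(γ α_w^{-(m_i−1)})). -/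
open Polynomial Finset
open scoped Classical

noncomputable instance {F : Type*} [Field F] (f : Polynomial F) :
    Algebra (Polynomial F) (AdjoinRoot f) := Ideal.Quotient.algebra _

/-- Evaluation of an element of `F[x]/⟨p⟩` at the root of `g` in `F_w = F[x]/⟨g⟩`,
defined to be `0` when `g` does not divide `p` (i.e. when `ε_{w,i} = 0`). -/
noncomputable def evalMap {F : Type*} [Field F] (p g : Polynomial F) :
    AdjoinRoot p → AdjoinRoot g :=
  if hd : g ∣ p then
    (AdjoinRoot.liftAlgHom p (Algebra.ofId F (AdjoinRoot g)) (AdjoinRoot.root g) (by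
      have h : aeval (AdjoinRoot.root g) p = 0 := by
        obtain ⟨c, hc⟩ := hd
        rw [hc, map_mul]
        simp [AdjoinRoot.aeval_eq, AdjoinRoot.mk_self]
      exact h) : AdjoinRoot p → AdjoinRoot g)
  else fun _ => 0

/-- The polynomial `∑ j a_j x^j` associated to a coefficient vector. -/
noncomputable def blockPoly {F : Type*} [Field F] {n : ℕ} (a : Fin n → F) : Polynomial F :=
  ∑ j, Polynomial.C (a j) * Polynomial.X ^ (j : ℕ)

/-!
Let `p = X ^ m - C a` with `a ≠ 0` and `m` invertible in `F`. The root `α` of `p` is a unit and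
`Tr(α ^ n)` vanishes unless `m ∣ n`, so `Tr(α ^ k * α⁻¹ ^ j) = m δ_{jk}` for `j, k < m`: every
`u ∈ F[X]/⟨p⟩` is recovered from the traces `Tr(u α⁻¹ ^ j)`, which are `m` times its coefficients.
When `p` is the product of pairwise coprime `g_w`, the Chinese remainder isomorphism
`F[X]/⟨p⟩ ≃ ∏_w F_w` sends `α` to `(α_w)_w` and is compatible with traces, so
`Tr(u α⁻¹ ^ j) = ∑_w Tr_{F_w}(u(α_w) α_w⁻¹ ^ j)`: this is the concatenation formula applied to the
constituents of `u`. Conversely, CRT idempotents `e_w` glue constituents `δ_w` of different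
codewords `u_w ∈ C` into the single codeword `∑_w e_w • u_w ∈ C`.
-/

theorem Nat.cast_ne_zero_of_coprime_card {K : Type*} [Field K] [Fintype K] {n : ℕ}
    (h : n.Coprime (Fintype.card K)) : (n : K) ≠ 0 := by
  intro hn
  have hbezout := congrArg (Int.cast : ℤ → K) (Nat.gcd_eq_gcd_ab n (Fintype.card K))
  simp [h.gcd_eq_one, hn] at hbezout

theorem map_ringInverse_of_isUnit {M N F : Type*} [MonoidWithZero M] [MonoidWithZero N]
    [FunLike F M N] [MonoidHomClass F M N] (f : F) {x : M} (hx : IsUnit x) :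
    f (Ring.inverse x) = Ring.inverse (f x) :=
  calc f (Ring.inverse x) = Ring.inverse (f x) * (f x * f (Ring.inverse x)) :=
        (Ring.inverse_mul_cancel_left _ _ (hx.map f)).symm
    _ = Ring.inverse (f x) := by rw [← map_mul, Ring.mul_inverse_cancel x hx, map_one, mul_one]

theorem Algebra.trace_pi {R ι : Type*} [CommRing R] [Fintype ι] {B : ι → Type*}
    [∀ i, CommRing (B i)] [∀ i, Algebra R (B i)] [∀ i, Module.Free R (B i)]
    [∀ i, Module.Finite R (B i)] (x : ∀ i, B i) :
    Algebra.trace R (∀ i, B i) x = ∑ i, Algebra.trace R (B i) (x i) := by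
  classical
  let b := fun i => Module.Free.chooseBasis R (B i)
  rw [trace_eq_matrix_trace (Pi.basis b), Matrix.trace, ← univ_sigma_univ, sum_sigma]
  refine sum_congr rfl fun i _ => ?_
  rw [trace_eq_matrix_trace (b i), Matrix.trace]
  refine sum_congr rfl fun j _ => ?_
  simp [leftMulMatrix_eq_repr_mul, Pi.basis_repr, Pi.basis_apply, Pi.mul_apply]

section

open AdjoinRoot

variable {K : Type*} [Field K]

theorem pairwise_isCoprime_of_monic_irreducible {ι : Type*} {g : ι → K[X]}
    (hirr : ∀ i, Irreducible (g i)) (hmon : ∀ i, (g i).Monic) (hinj : Function.Injective g) :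
    Pairwise fun i j => IsCoprime (g i) (g j) := fun i j hij =>
  (hirr i).coprime_iff_not_dvd.mpr fun hdvd => hij <| hinj <|
    eq_of_monic_of_associated (hmon i) (hmon j) ((hirr i).associated_of_dvd (hirr j) hdvd)

theorem evalMap_of_dvd {p g : K[X]} (h : g ∣ p) :
    evalMap p g = algHomOfDvd K p g h := by
  rw [evalMap, dif_pos h, coe_algHomOfDvd]

theorem evalMap_of_not_dvd {p g : K[X]} (h : ¬ g ∣ p) :
    evalMap p g = 0 := by
  rw [evalMap, dif_neg h]; rfl

theorem AdjoinRoot.algHomOfDvd_mk {p g : K[X]} (h : g ∣ p) (f : K[X]) :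
    algHomOfDvd K p g h (mk p f) = mk g f := by
  rw [coe_algHomOfDvd]
  exact aeval_eq f

theorem blockPoly_coeff {n : ℕ} {q : K[X]} (hq : q.natDegree < n) :
    blockPoly (fun j : Fin n => q.coeff j) = q := by
  rw [blockPoly, Fin.sum_univ_eq_sum_range (fun j => C (q.coeff j) * X ^ j)]
  simp_rw [C_mul_X_pow_eq_monomial]
  exact (q.as_sum_range' n hq).symm

theorem trace_adjoinRoot_eq_sum_trace_evalMap {ι : Type*} {g : ι → K[X]} {s : Finset ι}
    (hg : ∀ i ∈ s, g i ≠ 0) (hcop : (s : Set ι).Pairwise fun i j => IsCoprime (g i) (g j))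
    {p : K[X]} (hp : p = ∏ i ∈ s, g i) (z : AdjoinRoot p) :
    Algebra.trace K (AdjoinRoot p) z
      = ∑ i ∈ s, Algebra.trace K (AdjoinRoot (g i)) (evalMap p (g i) z) := by
  have hdvd : ∀ i ∈ s, g i ∣ p := fun i hi => hp ▸ dvd_prod_of_mem g hi
  have hinf : ⨅ i : s, Ideal.span {g i} = Ideal.span {p} := by
    rw [Ideal.iInf_span_singleton, prod_coe_sort, hp]
    exact fun i j hij => hcop i.2 j.2 (Subtype.coe_ne_coe.mpr hij)
  let e : AdjoinRoot p ≃ₐ[K] ∀ i : s, AdjoinRoot (g i) :=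
    AlgEquiv.ofRingEquiv (f := (Ideal.quotEquivOfEq hinf.symm).trans
      (Ideal.quotientInfRingEquivPiQuotient _ fun i j hij =>
        (Ideal.isCoprime_span_singleton_iff _ _).mpr (hcop i.2 j.2 (Subtype.coe_ne_coe.mpr hij))))
      fun _ => rfl
  have : ∀ i : s, Module.Finite K (AdjoinRoot (g i)) := fun i => (powerBasis (hg i i.2)).finite
  rw [← Algebra.trace_eq_of_algEquiv e, Algebra.trace_pi, ← sum_coe_sort s]
  refine sum_congr rfl fun i _ => congrArg _ ?_
  obtain ⟨f, rfl⟩ := mk_surjective z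
  rw [evalMap_of_dvd (hdvd i i.2), algHomOfDvd_mk]
  rfl

theorem exists_mem_forall_evalMap_eq {ι κ : Type*} [Fintype ι] {p : κ → K[X]}
    {g : ι → K[X]} (hcop : Pairwise fun i j => IsCoprime (g i) (g j))
    (N : Submodule K[X] (∀ k, AdjoinRoot (p k))) {u : ι → ∀ k, AdjoinRoot (p k)}
    (hu : ∀ i, u i ∈ N) :
    ∃ v ∈ N, ∀ i k, evalMap (p k) (g i) (v k) = evalMap (p k) (g i) (u i k) := by
  classical
  have hidem (i : ι) :
      ∃ e : K[X], ∀ j, mk (g j) e = (Pi.single i 1 : ∀ j, AdjoinRoot (g j)) j :=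
    Ideal.pi_quotient_surjective (I := fun j => Ideal.span {g j}) (fun j j' hjj' =>
      (Ideal.isCoprime_span_singleton_iff _ _).mpr (hcop hjj')) (Pi.single i 1)
  choose e he using hidem
  refine ⟨∑ i, e i • u i, sum_mem fun i _ => N.smul_mem _ (hu i), fun i k => ?_⟩
  by_cases hdvd : g i ∣ p k
  · have hsmul (f : K[X]) (x : AdjoinRoot (p k)) : f • x = mk (p k) f * x := rfl
    simp only [evalMap_of_dvd hdvd, Finset.sum_apply, Pi.smul_apply, hsmul, map_sum, map_mul,
      algHomOfDvd_mk, he]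
    rw [Fintype.sum_eq_single i fun j hj => by rw [Pi.single_eq_of_ne' hj, zero_mul],
      Pi.single_eq_same, one_mul]
  · simp [evalMap_of_not_dvd hdvd]

section XPowSubC

variable {m : ℕ} {a : K}

theorem root_X_pow_sub_C_pow_eq_smul (n : ℕ) :
    root (X ^ m - C a) ^ n = a ^ (n / m) • root (X ^ m - C a) ^ (n % m) := by
  conv_lhs => rw [← Nat.div_add_mod n m, pow_add, pow_mul, root_X_pow_sub_C_pow]
  rw [← map_pow, Algebra.smul_def]
  rfl

theorem trace_root_X_pow_sub_C_pow (hm : m ≠ 0) (n : ℕ) :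
    Algebra.trace K (AdjoinRoot (X ^ m - C a)) (root (X ^ m - C a) ^ n)
      = if m ∣ n then m * a ^ (n / m) else 0 := by
  set pb := powerBasis' (monic_X_pow_sub_C a hm)
  have hdim : pb.dim = m := natDegree_X_pow_sub_C
  have hdiag (i : Fin pb.dim) : pb.basis.repr (root (X ^ m - C a) ^ n * pb.basis i) i
      = if m ∣ n then a ^ (n / m) else 0 := by
    have hi : (i : ℕ) < m := by have := i.2; omega
    have hmod : (n + i) % m < pb.dim := by
      have := Nat.mod_lt (n + i) (Nat.pos_of_ne_zero hm); omega
    rw [pb.basis_eq_pow, powerBasis'_gen, ← pow_add, root_X_pow_sub_C_pow_eq_smul,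
      show root (X ^ m - C a) ^ ((n + i) % m) = pb.basis ⟨_, hmod⟩ by
        rw [pb.basis_eq_pow, powerBasis'_gen], map_smul, pb.basis.repr_self, Finsupp.smul_apply,
      Finsupp.single_apply]
    by_cases hdvd : m ∣ n
    · obtain ⟨c, rfl⟩ := hdvd
      simp [Nat.mul_add_div (Nat.pos_of_ne_zero hm), Nat.mod_eq_of_lt hi, Nat.div_eq_of_lt hi, hm]
    · have hne : (n + i) % m ≠ i := fun h => hdvd <| (Nat.modEq_zero_iff_dvd).mp <|
        Nat.ModEq.add_right_cancel' i (by rwa [Nat.ModEq, zero_add, Nat.mod_eq_of_lt hi])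
      simp [Fin.ext_iff, hne, hdvd]
  rw [Algebra.trace_eq_matrix_trace pb.basis, Matrix.trace]
  simp only [Matrix.diag_apply, Algebra.leftMulMatrix_eq_repr_mul, hdiag]
  split_ifs <;> simp [hdim]

theorem inv_smul_root_X_pow_sub_C_pow (ha : a ≠ 0) :
    a⁻¹ • root (X ^ m - C a) ^ m = 1 := by
  rw [root_X_pow_sub_C_pow, ← AdjoinRoot.algebraMap_eq, Algebra.smul_def, ← map_mul,
    inv_mul_cancel₀ ha, map_one]

theorem isUnit_root_X_pow_sub_C (hm : m ≠ 0) (ha : a ≠ 0) : IsUnit (root (X ^ m - C a)) := by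
  refine IsUnit.of_mul_eq_one (a⁻¹ • root (X ^ m - C a) ^ (m - 1)) ?_
  rw [mul_smul_comm, ← pow_succ', Nat.sub_add_cancel (Nat.pos_of_ne_zero hm),
    inv_smul_root_X_pow_sub_C_pow ha]

theorem inverse_root_X_pow_sub_C_pow (hm : m ≠ 0) (ha : a ≠ 0) {j : ℕ} (hj : j ≤ m) :
    Ring.inverse (root (X ^ m - C a)) ^ j = a⁻¹ • root (X ^ m - C a) ^ (m - j) := by
  rw [Ring.inverse_pow, eq_comm, ← one_mul (Ring.inverse _),
    Ring.eq_mul_inverse_iff_mul_eq _ _ _ ((isUnit_root_X_pow_sub_C hm ha).pow j), smul_mul_assoc,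
    ← pow_add, Nat.sub_add_cancel hj, inv_smul_root_X_pow_sub_C_pow ha]

theorem trace_root_pow_mul_inverse_root_pow (hm : m ≠ 0) (ha : a ≠ 0) {k j : ℕ} (hk : k < m)
    (hj : j < m) :
    Algebra.trace K (AdjoinRoot (X ^ m - C a))
      (root (X ^ m - C a) ^ k * Ring.inverse (root (X ^ m - C a)) ^ j)
      = if k = j then (m : K) else 0 := by
  rw [inverse_root_X_pow_sub_C_pow hm ha hj.le, mul_smul_comm, ← pow_add, map_smul,
    trace_root_X_pow_sub_C_pow hm, smul_eq_mul]
  by_cases hkj : k = j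
  · subst hkj
    rw [Nat.add_sub_cancel' hk.le, if_pos dvd_rfl, if_pos rfl,
      Nat.div_self (Nat.pos_of_ne_zero hm), pow_one, mul_left_comm, inv_mul_cancel₀ ha, mul_one]
  · have hndvd : ¬ m ∣ k + (m - j) := fun h =>
      hkj (by have := Nat.eq_of_dvd_of_lt_two_mul (by omega) h (by omega); omega)
    simp [hkj, hndvd]

theorem trace_mk_mul_inverse_root_pow (hm : m ≠ 0) (ha : a ≠ 0) {q : K[X]}
    (hq : q.natDegree < m) {j : ℕ} (hj : j < m) :
    Algebra.trace K (AdjoinRoot (X ^ m - C a))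
      (mk (X ^ m - C a) q * Ring.inverse (root (X ^ m - C a)) ^ j) = m * q.coeff j := by
  have hsum : mk (X ^ m - C a) q = ∑ k ∈ range m, q.coeff k • root (X ^ m - C a) ^ k := by
    conv_lhs => rw [q.as_sum_range' m hq]
    simp [← C_mul_X_pow_eq_monomial, Algebra.smul_def, AdjoinRoot.algebraMap_eq]
  rw [hsum, sum_mul, map_sum, sum_eq_single_of_mem j (mem_range.mpr hj)]
  · rw [smul_mul_assoc, map_smul, trace_root_pow_mul_inverse_root_pow hm ha hj hj, if_pos rfl,
      smul_eq_mul, mul_comm]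
  · intro k hk hkj
    rw [smul_mul_assoc, map_smul, trace_root_pow_mul_inverse_root_pow hm ha (mem_range.mp hk) hj,
      if_neg hkj, smul_zero]

theorem mk_blockPoly_trace_mul_inverse_root_pow (hm : (m : K) ≠ 0) (ha : a ≠ 0)
    (u : AdjoinRoot (X ^ m - C a)) :
    mk (X ^ m - C a) (blockPoly fun j : Fin m => (m : K)⁻¹ *
      Algebra.trace K (AdjoinRoot (X ^ m - C a))
        (u * Ring.inverse (root (X ^ m - C a)) ^ (j : ℕ))) = u := by
  have hm0 : m ≠ 0 := by rintro rfl; simp at hm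
  have hmonic := monic_X_pow_sub_C a hm0
  obtain ⟨f, rfl⟩ := mk_surjective u
  have hf : mk (X ^ m - C a) f = mk (X ^ m - C a) (f %ₘ (X ^ m - C a)) :=
    (mk_leftInverse hmonic _).symm
  have hdeg : (f %ₘ (X ^ m - C a)).natDegree < m := by
    simpa using natDegree_modByMonic_lt f hmonic
      (ne_of_apply_ne natDegree (by rwa [natDegree_X_pow_sub_C, natDegree_one]))
  simp_rw [hf, trace_mk_mul_inverse_root_pow hm0 ha hdeg (Fin.is_lt _),
    inv_mul_cancel_left₀ hm, blockPoly_coeff hdeg]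

theorem mk_blockPoly_sum_trace_evalMap {ι : Type*} [Fintype ι] {g : ι → K[X]}
    (hcop : Pairwise fun i j => IsCoprime (g i) (g j)) (hm : (m : K) ≠ 0) (ha : a ≠ 0)
    (hp : X ^ m - C a = ∏ i ∈ univ.filter (g · ∣ X ^ m - C a), g i)
    (u : AdjoinRoot (X ^ m - C a)) :
    mk (X ^ m - C a) (blockPoly fun j : Fin m => (m : K)⁻¹ *
      ∑ i, Algebra.trace K (AdjoinRoot (g i))
        (evalMap (X ^ m - C a) (g i) u * Ring.inverse (root (g i)) ^ (j : ℕ))) = u := by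
  have hm0 : m ≠ 0 := by rintro rfl; simp at hm
  have hroot := isUnit_root_X_pow_sub_C hm0 ha
  conv_rhs => rw [← mk_blockPoly_trace_mul_inverse_root_pow hm ha u]
  congr 3 with j
  rw [trace_adjoinRoot_eq_sum_trace_evalMap
    (fun i hi => ne_zero_of_dvd_ne_zero (X_pow_sub_C_ne_zero (Nat.pos_of_ne_zero hm0) a)
      (mem_filter.mp hi).2)
    (fun i _ j _ hij => hcop hij) hp]
  rw [← sum_subset (M := K) (subset_univ (univ.filter (g · ∣ X ^ m - C a)))
    fun i _ hi => ?_]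
  · refine congrArg _ (sum_congr rfl fun i hi => ?_)
    simp only [evalMap_of_dvd (mem_filter.mp hi).2, map_mul, map_pow,
      map_ringInverse_of_isUnit _ hroot, algHomOfDvd_root]
  · rw [evalMap_of_not_dvd fun h => hi (mem_filter.mpr ⟨mem_univ i, h⟩), Pi.zero_apply,
      zero_mul, map_zero]

end XPowSubC

end

theorem multiTwisted_concatenated_structure_general (F : Type*) [Field F] [Fintype F]
    (ℓ r : ℕ) (m : Fin ℓ → ℕ)
    (hco : ∀ i, Nat.Coprime (m i) (Fintype.card F))
    (Λ : Fin ℓ → F) (hΛ : ∀ i, Λ i ≠ 0)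
    (g : Fin r → Polynomial F) (hirr : ∀ w, Irreducible (g w))
    (hmon : ∀ w, (g w).Monic) (hdist : Function.Injective g)
    (ε : Fin r → Fin ℓ → ℕ)
    (hε : ∀ w i, ε w i = if g w ∣ (X ^ m i - C (Λ i)) then 1 else 0)
    (hfact : ∀ i, (X : Polynomial F) ^ m i - C (Λ i) = ∏ w, g w ^ ε w i)
    (Ccode : Submodule (Polynomial F)
      (∀ i, AdjoinRoot ((X : Polynomial F) ^ m i - C (Λ i)))) :
    (Ccode : Set (∀ i, AdjoinRoot ((X : Polynomial F) ^ m i - C (Λ i))))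
      = {v | ∃ δ : ∀ w : Fin r, Fin ℓ → AdjoinRoot (g w),
          (∀ w, δ w ∈ (fun (u : ∀ i, AdjoinRoot ((X : Polynomial F) ^ m i - C (Λ i))) =>
              fun i => evalMap (X ^ m i - C (Λ i)) (g w) (u i)) ''
            (Ccode : Set (∀ i, AdjoinRoot ((X : Polynomial F) ^ m i - C (Λ i))))) ∧
          v = fun i => AdjoinRoot.mk ((X : Polynomial F) ^ m i - C (Λ i))
            (blockPoly (fun j : Fin (m i) => (m i : F)⁻¹ *
              ∑ w, Algebra.trace F (AdjoinRoot (g w))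
                (δ w i * Ring.inverse (AdjoinRoot.root (g w)) ^ (j : ℕ))))} := by
  have hcop := pairwise_isCoprime_of_monic_irreducible hirr hmon hdist
  have hsplit (i : Fin ℓ) :
      X ^ m i - C (Λ i) = ∏ w ∈ univ.filter (g · ∣ X ^ m i - C (Λ i)), g w :=
    (hfact i).trans <| by
      rw [prod_filter]
      exact prod_congr rfl fun w _ => by rw [hε, pow_ite, pow_one, pow_zero]
  have hinv (i : Fin ℓ) := mk_blockPoly_sum_trace_evalMap hcop
    (Nat.cast_ne_zero_of_coprime_card (hco i)) (hΛ i) (hsplit i)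
  ext v
  constructor
  · intro hv
    exact ⟨fun w i => evalMap _ _ (v i), fun w => ⟨v, hv, rfl⟩,
      funext fun i => (hinv i (v i)).symm⟩
  · rintro ⟨δ, hδ, rfl⟩
    choose u hu hδu using hδ
    obtain ⟨v, hv, hvu⟩ := exists_mem_forall_evalMap_eq hcop Ccode hu
    rw [SetLike.mem_coe]
    convert hv using 1
    funext i
    conv_rhs => rw [← hinv i (v i)]
    simp_rw [hvu, ← hδu]

/-- Concatenated structure / trace description of a `Λ`-multi-twisted code: a vector
lies in `C` iff it is `Σ_w ψ_w(δ_w)` for constituents `δ_w ∈ C_w`, where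
`ψ_{w,i}(γ) = (1/m_i)(Tr_{F_w/F_q}(γ), Tr_{F_w/F_q}(γ α_w^{-1}),…,Tr_{F_w/F_q}(γ α_w^{-(m_i−1)}))`,
i.e. `C = ⊕_{w=1}^r ⟨Θ_w⟩ □ C_w`. -/
theorem multiTwisted_concatenated_structure (F : Type*) [Field F] [Fintype F]
    (ℓ r : ℕ) (m : Fin ℓ → ℕ) (hm : ∀ i, 0 < m i)
    (hco : ∀ i, Nat.Coprime (m i) (Fintype.card F))
    (Λ : Fin ℓ → F) (hΛ : ∀ i, Λ i ≠ 0)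
    (g : Fin r → Polynomial F) (hirr : ∀ w, Irreducible (g w))
    (hmon : ∀ w, (g w).Monic) (hdist : Function.Injective g)
    (ε : Fin r → Fin ℓ → ℕ)
    (hε : ∀ w i, ε w i = if g w ∣ (X ^ m i - C (Λ i)) then 1 else 0)
    (hfact : ∀ i, (X : Polynomial F) ^ m i - C (Λ i) = ∏ w, g w ^ ε w i)
    (Ccode : Submodule (Polynomial F)
      (∀ i, AdjoinRoot ((X : Polynomial F) ^ m i - C (Λ i)))) :
    (Ccode : Set (∀ i, AdjoinRoot ((X : Polynomial F) ^ m i - C (Λ i))))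
      = {v | ∃ δ : ∀ w : Fin r, Fin ℓ → AdjoinRoot (g w),
          (∀ w, δ w ∈ (fun (u : ∀ i, AdjoinRoot ((X : Polynomial F) ^ m i - C (Λ i))) =>
              fun i => evalMap (X ^ m i - C (Λ i)) (g w) (u i)) ''
            (Ccode : Set (∀ i, AdjoinRoot ((X : Polynomial F) ^ m i - C (Λ i))))) ∧
          v = fun i => AdjoinRoot.mk ((X : Polynomial F) ^ m i - C (Λ i))
            (blockPoly (fun j : Fin (m i) => (m i : F)⁻¹ *
              ∑ w, Algebra.trace F (AdjoinRoot (g w))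
                (δ w i * Ring.inverse (AdjoinRoot.root (g w)) ^ (j : ℕ))))} :=
  multiTwisted_concatenated_structure_general F ℓ r m hco Λ hΛ g hirr hmon hdist ε hε hfact Ccode
end

section
/- Let C be a Λ-multi-twisted code with nonzero constituents C_{w_1},…,C_{w_t} of minimum Hamming distances 𝔡_1 ≤ 𝔡_2 ≤ ⋯ ≤ 𝔡_t. For 1 ≤ v ≤ t define 𝔎_v = min over subsets I ⊆ {1,…,ℓ} of size 𝔡_v of Σ_{g∈I} d_min(⟨Θ_{w_1,g}⟩ ⊕ ⋯ ⊕ ⟨Θ_{w_t,g}⟩). Then d_min(C) ≥ min{𝔎_1,…,𝔎_t}. -/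
/-! Write `P_i = x^{m_i} - λ_i`, a product of distinct monic irreducibles `g_w`. The projection of a
codeword `a` to the constituent `C_w` evaluates each block `a_i(x)` at the root of `g_w`. If all
projections to the nonzero constituents vanished, every `g_w ∣ P_i` would divide `a_i(x)` (for the
zero constituents this holds by assumption), so `P_i ∣ a_i(x)` and `a = 0` by degree. Hence some
projection to a nonzero `C_{w_v}` is a nonzero codeword, with at least `𝔡_v` nonzero entries `i`,
at each of which the block `a_i` is nonzero. By the Chinese remainder theorem every block `a_i`
splits into components in `⟨Θ_{w_1,i}⟩, …, ⟨Θ_{w_t,i}⟩`, so `wt(a_i) ≥ d_min(⊕_v ⟨Θ_{w_v,i}⟩)`, and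
summing over `𝔡_v` such positions gives `wt(a) ≥ 𝔎_v`. -/

open Polynomial Finset
open scoped Classical

/-- Hamming weight of a tuple. -/
noncomputable def hWeight {ι : Type*} [Fintype ι] {K : ι → Type*} [∀ i, Zero (K i)]
    (c : ∀ i, K i) : ℕ :=
  (Finset.univ.filter fun i => c i ≠ 0).card

/-- The minimum (Hamming) weight of the nonzero elements of a set `S`
(equal to `0` = `sInf ∅` when `S ⊆ {0}`). -/
noncomputable def dminSet {α : Type*} [Zero α] (wt : α → ℕ) (S : Set α) : ℕ :=
  sInf (wt '' (S \ {0}))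

open Function

/-- Chinese remainder decomposition of `b`: the factors outside `T` need no component since they
already divide `b`. -/
theorem exists_prod_dvd_sub_sum_prod_erase_mul {R ι : Type*} [CommRing R] [DecidableEq ι]
    {S T : Finset ι} {g : ι → R} (hcop : (S : Set ι).Pairwise (IsCoprime on g)) {b : R}
    (hb : ∀ w ∈ S, w ∉ T → g w ∣ b) :
    ∃ u : ι → R, ∏ w ∈ S, g w ∣ b - ∑ v ∈ T, (∏ w ∈ S.erase v, g w) * u v := by
  have hbezout : ∀ v, ∃ y : R, v ∈ S → g v ∣ (∏ w ∈ S.erase v, g w) * y - 1 := by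
    intro v
    by_cases hv : v ∈ S
    · obtain ⟨x, y, hxy⟩ := IsCoprime.prod_right fun w hw =>
        hcop hv (mem_of_mem_erase hw) (ne_of_mem_erase hw).symm
      exact ⟨y, fun _ => ⟨-x, by linear_combination hxy⟩⟩
    · exact ⟨0, fun h => absurd h hv⟩
  choose y hy using hbezout
  refine ⟨fun v => y v * b, prod_dvd_of_coprime hcop fun w hw => ?_⟩
  have hcofactor : ∀ v, v ≠ w → g w ∣ (∏ x ∈ S.erase v, g x) * (y v * b) :=
    fun v hvw => dvd_mul_of_dvd_left (dvd_prod_of_mem g (mem_erase.mpr ⟨hvw.symm, hw⟩)) _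
  by_cases hwT : w ∈ T
  · rw [← add_sum_erase T _ hwT, sub_add_eq_sub_sub]
    refine dvd_sub ?_ (dvd_sum fun v hv => hcofactor v (ne_of_mem_erase hv))
    obtain ⟨c, hc⟩ := hy w hw
    exact ⟨-c * b, by linear_combination -b * hc⟩
  · exact dvd_sub (hb w hw hwT) (dvd_sum fun v hv => hcofactor v (ne_of_mem_of_not_mem hv hwT))

theorem Finset.prod_pow_ite_eq_prod_filter {M ι : Type*} [CommMonoid M] [Fintype ι]
    (g : ι → M) (p : ι → Prop) [DecidablePred p] (ε : ι → ℕ)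
    (hε : ∀ w, ε w = if p w then 1 else 0) :
    ∏ w, g w ^ ε w = ∏ w ∈ univ.filter p, g w := by
  rw [prod_filter]
  exact prod_congr rfl fun w _ => by rw [hε]; split_ifs <;> simp

theorem Finset.prod_div_eq_prod_erase {R ι : Type*} [EuclideanDomain R] [DecidableEq ι]
    {S : Finset ι} {g : ι → R} {v : ι} (hv : v ∈ S) (hgv : g v ≠ 0) :
    (∏ w ∈ S, g w) / g v = ∏ w ∈ S.erase v, g w := by
  rw [← mul_prod_erase S g hv, mul_div_cancel_left₀ _ hgv]

theorem Polynomial.isCoprime_of_irreducible_of_monic_of_ne {F : Type*} [Field F] {p q : F[X]}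
    (hp : Irreducible p) (hq : Irreducible q) (hpm : p.Monic) (hqm : q.Monic) (hne : p ≠ q) :
    IsCoprime p q :=
  hp.coprime_iff_not_dvd.mpr fun h =>
    hne (eq_of_monic_of_associated hpm hqm (hp.associated_of_dvd hq h))

theorem dminSet_le {α : Type*} [Zero α] (wt : α → ℕ) {S : Set α} {x : α} (hx : x ∈ S)
    (hx0 : x ≠ 0) : dminSet wt S ≤ wt x :=
  Nat.sInf_le ⟨x, ⟨hx, hx0⟩, rfl⟩

theorem sInf_sum_image_card_eq_le {ι : Type*} [Fintype ι] (d x : ι → ℕ) {J : Finset ι}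
    (hJ : ∀ j ∈ J, d j ≤ x j) {k : ℕ} (hk : k ≤ J.card) :
    sInf ((fun I : Finset ι => ∑ j ∈ I, d j) '' {I | I.card = k}) ≤ ∑ j, x j := by
  obtain ⟨I, hIJ, hIk⟩ := exists_subset_card_eq hk
  calc sInf ((fun I : Finset ι => ∑ j ∈ I, d j) '' {I | I.card = k})
      ≤ ∑ j ∈ I, d j := Nat.sInf_le ⟨I, hIk, rfl⟩
    _ ≤ ∑ j ∈ I, x j := sum_le_sum fun j hj => hJ j (hIJ hj)
    _ ≤ ∑ j, x j := sum_le_sum_of_subset (subset_univ I)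

section Blocks

variable {F : Type*} [Field F]

theorem evalMap_mk {p q : F[X]} (hd : q ∣ p) (s : F[X]) :
    evalMap p q (AdjoinRoot.mk p s) = AdjoinRoot.mk q s := by
  rw [evalMap, dif_pos hd]
  exact (AdjoinRoot.liftAlgHom_mk _ _ _ _ s).trans (AdjoinRoot.aeval_eq s)

theorem evalMap_mk_eq_zero_iff {p q : F[X]} (hd : q ∣ p) (s : F[X]) :
    evalMap p q (AdjoinRoot.mk p s) = 0 ↔ q ∣ s := by
  rw [evalMap_mk hd, AdjoinRoot.mk_eq_zero]

theorem evalMap_zero (p q : F[X]) : evalMap p q 0 = 0 := by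
  rw [evalMap]
  split
  · exact map_zero _
  · rfl

theorem blockPoly_coeff_s19 {n : ℕ} (b : Fin n → F) (j : Fin n) : (blockPoly b).coeff j = b j := by
  simp [blockPoly, finsetSum_coeff, coeff_X_pow, Fin.val_inj]

theorem degree_blockPoly_lt {n : ℕ} (b : Fin n → F) : (blockPoly b).degree < n :=
  (degree_sum_le _ _).trans_lt <| (Finset.sup_lt_iff (WithBot.bot_lt_coe n)).mpr fun j _ =>
    (degree_C_mul_X_pow_le _ _).trans_lt (Nat.cast_lt.mpr j.isLt)

theorem eq_zero_of_forall_dvd_blockPoly {ι : Type*} [Fintype ι] {n : ℕ} {P : F[X]}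
    (hdeg : P.degree = n) {g : ι → F[X]} (hcop : Pairwise (IsCoprime on g))
    (hPg : P = ∏ w ∈ univ.filter (g · ∣ P), g w) {b : Fin n → F}
    (hb : ∀ w, g w ∣ P → g w ∣ blockPoly b) : b = 0 := by
  have hP : P ∣ blockPoly b := by
    rw [hPg]
    exact prod_dvd_of_coprime (hcop.set_pairwise _) fun w hw => hb w (mem_filter.mp hw).2
  have hb0 : blockPoly b = 0 := eq_zero_of_dvd_of_degree_lt hP (hdeg ▸ degree_blockPoly_lt b)
  funext j
  simpa [hb0] using (blockPoly_coeff_s19 b j).symm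

theorem exists_evalMap_mk_blockPoly_ne_zero {ι : Type*} [Fintype ι] {n : ℕ} {P : F[X]}
    (hdeg : P.degree = n) {g : ι → F[X]} (hcop : Pairwise (IsCoprime on g))
    (hPg : P = ∏ w ∈ univ.filter (g · ∣ P), g w) {b : Fin n → F} (hb : b ≠ 0) :
    ∃ w, g w ∣ P ∧ evalMap P (g w) (AdjoinRoot.mk P (blockPoly b)) ≠ 0 := by
  by_contra! h
  exact hb (eq_zero_of_forall_dvd_blockPoly hdeg hcop hPg fun w hw =>
    (evalMap_mk_eq_zero_iff hw _).mp (h w hw))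

theorem eq_sum_coeff_modByMonic_of_dvd_blockPoly_sub {n : ℕ} {P : F[X]} (hP : P.Monic)
    (hdeg : P.degree = n) {κ : Type*} (s : Finset κ) (q : κ → F[X]) {b : Fin n → F}
    (h : P ∣ blockPoly b - ∑ v ∈ s, q v) :
    b = ∑ v ∈ s, fun j : Fin n => (q v %ₘ P).coeff j := by
  have hmod : (∑ v ∈ s, q v) %ₘ P = blockPoly b := by
    rw [← modByMonic_eq_of_dvd_sub hP h,
      (modByMonic_eq_self_iff hP).mpr (hdeg ▸ degree_blockPoly_lt b)]
  have hsum : ∑ v ∈ s, q v %ₘ P = (∑ v ∈ s, q v) %ₘ P := (map_sum (modByMonicHom P) q s).symm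
  funext j
  rw [Finset.sum_apply, ← finsetSum_coeff, hsum, hmod, blockPoly_coeff_s19]

/-- For `h = P / g_w` this is the minimal code `⟨Θ_{w,·}⟩`, written as coefficient vectors. -/
def residuesOfMultiples (P h : F[X]) (n : ℕ) : Set (Fin n → F) :=
  {c | ∃ f : F[X], ∀ s : Fin n, c s = ((h * f) %ₘ P).coeff s}

theorem exists_eq_sum_mem_residuesOfMultiples {ι κ : Type*} [Fintype ι] [Fintype κ] {n : ℕ}
    {P : F[X]} (hP : P.Monic) (hdeg : P.degree = n) {g : ι → F[X]} (hg0 : ∀ w, g w ≠ 0)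
    (hcop : Pairwise (IsCoprime on g)) (hPg : P = ∏ w ∈ univ.filter (g · ∣ P), g w)
    {wsel : κ → ι} (hwsel : Injective wsel) {b : Fin n → F}
    (hb : ∀ w, g w ∣ P → w ∉ Set.range wsel → g w ∣ blockPoly b) :
    ∃ f : κ → Fin n → F,
      (∀ v, f v ∈ if g (wsel v) ∣ P then residuesOfMultiples P (P / g (wsel v)) n else {0}) ∧
        b = ∑ v, f v := by
  set S := univ.filter (g · ∣ P)
  set K := univ.filter fun v => g (wsel v) ∣ P
  have hbS : ∀ w ∈ S, w ∉ K.image wsel → g w ∣ blockPoly b := by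
    intro w hw hwK
    refine hb w (mem_filter.mp hw).2 ?_
    rintro ⟨v, rfl⟩
    exact hwK (mem_image_of_mem _ (mem_filter.mpr ⟨mem_univ v, (mem_filter.mp hw).2⟩))
  obtain ⟨u, hu⟩ := exists_prod_dvd_sub_sum_prod_erase_mul (hcop.set_pairwise S) hbS
  set q : κ → F[X] := fun v => if g (wsel v) ∣ P then P / g (wsel v) * u (wsel v) else 0
  have hq : ∑ v, q v = ∑ w ∈ K.image wsel, (∏ x ∈ S.erase w, g x) * u w := by
    rw [sum_image hwsel.injOn, sum_filter]
    refine sum_congr rfl fun v _ => ?_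
    by_cases hv : g (wsel v) ∣ P
    · have hvS : wsel v ∈ S := mem_filter.mpr ⟨mem_univ _, hv⟩
      simp only [q, if_pos hv]
      rw [hPg, prod_div_eq_prod_erase hvS (hg0 _)]
    · simp only [q, if_neg hv]
  refine ⟨fun v j => (q v %ₘ P).coeff j, fun v => ?_,
    eq_sum_coeff_modByMonic_of_dvd_blockPoly_sub hP hdeg univ q (by rwa [hq, hPg])⟩
  by_cases hv : g (wsel v) ∣ P
  · rw [if_pos hv]
    exact ⟨u (wsel v), fun j => by simp only [q, if_pos hv]⟩
  · rw [if_neg hv, Set.mem_singleton_iff]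
    funext j
    simp [q, if_neg hv]

end Blocks

theorem multiTwisted_concatenated_distance_bound_general (F : Type*) [Field F]
    (ℓ r t : ℕ) (m : Fin ℓ → ℕ) (hm : ∀ i, 0 < m i)
    (Λ : Fin ℓ → F)
    (g : Fin r → Polynomial F) (hirr : ∀ w, Irreducible (g w))
    (hmon : ∀ w, (g w).Monic) (hdist : Function.Injective g)
    (ε : Fin r → Fin ℓ → ℕ)
    (hε : ∀ w i, ε w i = if g w ∣ (X ^ m i - C (Λ i)) then 1 else 0)
    (hfact : ∀ i, (X : Polynomial F) ^ m i - C (Λ i) = ∏ w, g w ^ ε w i)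
    (Ccode : Submodule (Polynomial F)
      (∀ i, AdjoinRoot ((X : Polynomial F) ^ m i - C (Λ i))))
    -- the constituents of `C`
    (Cw : ∀ w : Fin r, Set (Fin ℓ → AdjoinRoot (g w)))
    (hCw : ∀ w, Cw w = (fun (u : ∀ i, AdjoinRoot ((X : Polynomial F) ^ m i - C (Λ i))) =>
        fun i => evalMap (X ^ m i - C (Λ i)) (g w) (u i)) ''
      (Ccode : Set (∀ i, AdjoinRoot ((X : Polynomial F) ^ m i - C (Λ i)))))
    -- the nonzero constituents are exactly those indexed by `wsel`
    (wsel : Fin t → Fin r) (hwsel : Function.Injective wsel)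
    (hzero : ∀ w : Fin r, w ∉ Set.range wsel → Cw w = {0})
    -- the minimum distances `𝔡_1 ≤ ⋯ ≤ 𝔡_t` of the nonzero constituents
    (𝔡 : Fin t → ℕ) (h𝔡 : ∀ v, 𝔡 v = dminSet hWeight (Cw (wsel v)))
    -- the minimal constacyclic codes `⟨Θ_{w_v, g}⟩`
    (Mc : ∀ (_ : Fin t) (gdx : Fin ℓ), Set (Fin (m gdx) → F))
    (hMc : ∀ v gdx, Mc v gdx =
      if g (wsel v) ∣ ((X : Polynomial F) ^ m gdx - C (Λ gdx)) then
        {c | ∃ f : Polynomial F, ∀ s : Fin (m gdx),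
          c s = ((((X : Polynomial F) ^ m gdx - C (Λ gdx)) / g (wsel v) * f) %ₘ
              ((X : Polynomial F) ^ m gdx - C (Λ gdx))).coeff s.val}
      else {0})
    -- `d_min(⟨Θ_{w_1,g}⟩ ⊕ ⋯ ⊕ ⟨Θ_{w_t,g}⟩)` for each block index `g`
    (dTheta : Fin ℓ → ℕ)
    (hdTheta : ∀ gdx, dTheta gdx = dminSet hWeight
      {c : Fin (m gdx) → F | ∃ f : Fin t → (Fin (m gdx) → F),
        (∀ v, f v ∈ Mc v gdx) ∧ c = ∑ v, f v})
    -- the quantities `𝔎_v`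
    (𝔎 : Fin t → ℕ)
    (h𝔎 : ∀ v, 𝔎 v = sInf ((fun I : Finset (Fin ℓ) => ∑ gdx ∈ I, dTheta gdx) ''
      {I : Finset (Fin ℓ) | I.card = 𝔡 v})) :
    ∀ a : ∀ i, Fin (m i) → F,
      (fun i => AdjoinRoot.mk ((X : Polynomial F) ^ m i - C (Λ i)) (blockPoly (a i)))
        ∈ Ccode → a ≠ 0 →
      sInf (Set.range 𝔎) ≤ ∑ i, hWeight (a i) := by
  intro a hmem ha
  have hP : ∀ i, (X ^ m i - C (Λ i)).Monic := fun i => monic_X_pow_sub_C _ (hm i).ne'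
  have hdeg : ∀ i, (X ^ m i - C (Λ i)).degree = (m i : WithBot ℕ) :=
    fun i => degree_X_pow_sub_C (hm i) _
  have hcop : Pairwise (IsCoprime on g) := fun w w' hne =>
    isCoprime_of_irreducible_of_monic_of_ne (hirr w) (hirr w') (hmon w) (hmon w') (hdist.ne hne)
  have hPg : ∀ i, X ^ m i - C (Λ i) = ∏ w ∈ univ.filter (g · ∣ X ^ m i - C (Λ i)), g w :=
    fun i => (hfact i).trans (prod_pow_ite_eq_prod_filter g _ (ε · i) (hε · i))
  set π : ∀ w, Fin ℓ → AdjoinRoot (g w) := fun w i =>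
    evalMap (X ^ m i - C (Λ i)) (g w) (AdjoinRoot.mk _ (blockPoly (a i)))
  have hπC : ∀ w, π w ∈ Cw w := fun w => hCw w ▸ ⟨_, hmem, rfl⟩
  have hπ_zero : ∀ w ∉ Set.range wsel, π w = 0 :=
    fun w hwr => Set.eq_of_mem_singleton (hzero w hwr ▸ hπC w)
  have hout : ∀ i w, g w ∣ X ^ m i - C (Λ i) → w ∉ Set.range wsel → g w ∣ blockPoly (a i) :=
    fun i w hw hwr => (evalMap_mk_eq_zero_iff hw _).mp (congrFun (hπ_zero w hwr) i)
  have hdTheta_le : ∀ i, a i ≠ 0 → dTheta i ≤ hWeight (a i) := fun i hai => by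
    obtain ⟨f, hf, hsum⟩ := exists_eq_sum_mem_residuesOfMultiples (hP i) (hdeg i)
      (fun w => (hirr w).ne_zero) hcop (hPg i) hwsel (hout i)
    exact hdTheta i ▸ dminSet_le hWeight ⟨f, fun v => (hMc v i).symm ▸ hf v, hsum⟩ hai
  obtain ⟨i, hi⟩ := Function.ne_iff.mp ha
  obtain ⟨w, -, hw⟩ := exists_evalMap_mk_blockPoly_ne_zero (hdeg i) hcop (hPg i) hi
  have hv : π w ≠ 0 := fun h => hw (congrFun h i)
  obtain ⟨v, rfl⟩ : w ∈ Set.range wsel := by_contra fun hwr => hv (hπ_zero w hwr)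
  have hsupp : ∀ j, π (wsel v) j ≠ 0 → dTheta j ≤ hWeight (a j) := fun j hj =>
    hdTheta_le j fun h0 => hj (by simp [π, h0, blockPoly, evalMap_zero])
  calc sInf (Set.range 𝔎) ≤ 𝔎 v := Nat.sInf_le ⟨v, rfl⟩
    _ ≤ ∑ i, hWeight (a i) := h𝔎 v ▸ sInf_sum_image_card_eq_le dTheta _
      (J := univ.filter (π (wsel v) · ≠ 0)) (fun j hj => hsupp j (mem_filter.mp hj).2)
      (h𝔡 v ▸ dminSet_le hWeight (hπC _) hv)

/-- Minimum distance bound for a `Λ`-multi-twisted code `C` from its multilevel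
concatenated structure: with nonzero constituents `C_{w_1},…,C_{w_t}` of minimum
distances `𝔡_1 ≤ ⋯ ≤ 𝔡_t`, and
`𝔎_v = min_{|I| = 𝔡_v} Σ_{g ∈ I} d_min(⟨Θ_{w_1,g}⟩ ⊕ ⋯ ⊕ ⟨Θ_{w_t,g}⟩)`,
one has `d_min(C) ≥ min{𝔎_1,…,𝔎_t}`. -/
theorem multiTwisted_concatenated_distance_bound (F : Type*) [Field F] [Fintype F]
    (ℓ r t : ℕ) (ht : 0 < t) (m : Fin ℓ → ℕ) (hm : ∀ i, 0 < m i)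
    (hco : ∀ i, Nat.Coprime (m i) (Fintype.card F))
    (Λ : Fin ℓ → F) (hΛ : ∀ i, Λ i ≠ 0)
    (g : Fin r → Polynomial F) (hirr : ∀ w, Irreducible (g w))
    (hmon : ∀ w, (g w).Monic) (hdist : Function.Injective g)
    (ε : Fin r → Fin ℓ → ℕ)
    (hε : ∀ w i, ε w i = if g w ∣ (X ^ m i - C (Λ i)) then 1 else 0)
    (hfact : ∀ i, (X : Polynomial F) ^ m i - C (Λ i) = ∏ w, g w ^ ε w i)
    (Ccode : Submodule (Polynomial F)
      (∀ i, AdjoinRoot ((X : Polynomial F) ^ m i - C (Λ i))))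
    -- the constituents of `C`
    (Cw : ∀ w : Fin r, Set (Fin ℓ → AdjoinRoot (g w)))
    (hCw : ∀ w, Cw w = (fun (u : ∀ i, AdjoinRoot ((X : Polynomial F) ^ m i - C (Λ i))) =>
        fun i => evalMap (X ^ m i - C (Λ i)) (g w) (u i)) ''
      (Ccode : Set (∀ i, AdjoinRoot ((X : Polynomial F) ^ m i - C (Λ i)))))
    -- the nonzero constituents are exactly those indexed by `wsel`
    (wsel : Fin t → Fin r) (hwsel : Function.Injective wsel)
    (hzero : ∀ w : Fin r, w ∉ Set.range wsel → Cw w = {0})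
    (hnonzero : ∀ v : Fin t, Cw (wsel v) ≠ {0})
    -- the minimum distances `𝔡_1 ≤ ⋯ ≤ 𝔡_t` of the nonzero constituents
    (𝔡 : Fin t → ℕ) (h𝔡 : ∀ v, 𝔡 v = dminSet hWeight (Cw (wsel v)))
    (hsort : Monotone 𝔡)
    -- the minimal constacyclic codes `⟨Θ_{w_v, g}⟩`
    (Mc : ∀ (_ : Fin t) (gdx : Fin ℓ), Set (Fin (m gdx) → F))
    (hMc : ∀ v gdx, Mc v gdx =
      if g (wsel v) ∣ ((X : Polynomial F) ^ m gdx - C (Λ gdx)) then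
        {c | ∃ f : Polynomial F, ∀ s : Fin (m gdx),
          c s = ((((X : Polynomial F) ^ m gdx - C (Λ gdx)) / g (wsel v) * f) %ₘ
              ((X : Polynomial F) ^ m gdx - C (Λ gdx))).coeff s.val}
      else {0})
    -- `d_min(⟨Θ_{w_1,g}⟩ ⊕ ⋯ ⊕ ⟨Θ_{w_t,g}⟩)` for each block index `g`
    (dTheta : Fin ℓ → ℕ)
    (hdTheta : ∀ gdx, dTheta gdx = dminSet hWeight
      {c : Fin (m gdx) → F | ∃ f : Fin t → (Fin (m gdx) → F),
        (∀ v, f v ∈ Mc v gdx) ∧ c = ∑ v, f v})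
    -- the quantities `𝔎_v`
    (𝔎 : Fin t → ℕ)
    (h𝔎 : ∀ v, 𝔎 v = sInf ((fun I : Finset (Fin ℓ) => ∑ gdx ∈ I, dTheta gdx) ''
      {I : Finset (Fin ℓ) | I.card = 𝔡 v})) :
    ∀ a : ∀ i, Fin (m i) → F,
      (fun i => AdjoinRoot.mk ((X : Polynomial F) ^ m i - C (Λ i)) (blockPoly (a i)))
        ∈ Ccode → a ≠ 0 →
      sInf (Set.range 𝔎) ≤ ∑ i, hWeight (a i) :=
  multiTwisted_concatenated_distance_bound_general F ℓ r t m hm Λ g hirr hmon hdist ε hε hfact Ccode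
    Cw hCw wsel hwsel hzero 𝔡 h𝔡 Mc hMc dTheta hdTheta 𝔎 h𝔎
end
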